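/- arXiv:2103.15161 — 7 statements merged into one kernel-verified Lean document; each statement's English description precedes it below -/
import Mathlib

section
/- Let G be a finite group. For each complex irreducible character χ of G, define θ_χ(a) = Σ_{b∈G} |C_G(ab)b ∩ C_G(a)| · χ([a,b]) and m_χ = Σ_{a∈G} θ_χ(a). Then for every g ∈ G, f_3(g) = (1/|G|) · Σ_{χ∈Irr(G)} m_χ · χ(g). -/
/-- `χ` is the character of an irreducible complex representation of `G`. -/
def IsIrredChar (G : Type) [Group G] (χ : G → ℂ) : Prop :=
  ∃ V : FDRep ℂ G, CategoryTheory.Simple V ∧ χ = V.character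

/-- `|C_G(ab)b ∩ C_G(a)|`, where `C_G(x)` is the centralizer of `x`. -/
noncomputable def centInt {G : Type} [Group G] (a b : G) : ℕ :=
  Nat.card {x : G | x * b⁻¹ ∈ Subgroup.centralizer ({a * b} : Set G) ∧
    x ∈ Subgroup.centralizer ({a} : Set G)}

/-- the number of ordered triples `(x,y,z)` with `[x,y] = [x,z] = [y,z] = g`,
where `[x,y] = x⁻¹y⁻¹xy`. -/
noncomputable def f3 {G : Type} [Group G] (g : G) : ℕ :=
  Nat.card {t : G × G × G //
    t.1⁻¹ * t.2.1⁻¹ * t.1 * t.2.1 = g ∧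
    t.1⁻¹ * t.2.2⁻¹ * t.1 * t.2.2 = g ∧
    t.2.1⁻¹ * t.2.2⁻¹ * t.2.1 * t.2.2 = g}

/-!
Counting the triples `(x, y, z)` with `[x,z] = [y,z] = [x,y]` through the substitution
`(x, y, z) = (ba, b, bwb⁻¹)` gives `∑_h f3(h) φ(h) = ∑_{a,b} |C_G(ab)b ∩ C_G(a)| φ([a,b])`, i.e.
`m_χ = ∑_h f3(h) χ(h)`. As `f3` is a class function with `f3(h⁻¹) = f3(h)`, the claim is the
expansion of `f3` in the orthogonal basis `Irr(G)` of the class functions. Completeness of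
`Irr(G)` is proved in the group algebra: for a class function `f` orthogonal to every irreducible
character, `t = ∑ f(x) x` is central, so it acts on each simple left ideal by a scalar, whose
trace `⟨f, χ⟩ = 0` forces it to vanish; hence `t` kills the semisimple module `ℂ[G]`.
-/

universe u

open scoped MonoidAlgebra
open CategoryTheory

section Commutators

variable {G : Type*} [Group G]

def EqualCommutators (x y z : G) : Prop :=
  x⁻¹ * z⁻¹ * x * z = x⁻¹ * y⁻¹ * x * y ∧ y⁻¹ * z⁻¹ * y * z = x⁻¹ * y⁻¹ * x * y

instance [DecidableEq G] (x y z : G) : Decidable (EqualCommutators x y z) := instDecidableAnd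

theorem equalCommutators_mul_conj_iff (a b w : G) :
    EqualCommutators (b * a) b (b * w * b⁻¹) ↔
      w * b⁻¹ ∈ Subgroup.centralizer {a * b} ∧ w ∈ Subgroup.centralizer {a} := by
  simp only [EqualCommutators, Subgroup.mem_centralizer_singleton_iff, mul_assoc, mul_inv_rev,
    inv_inv, mul_right_inj, inv_mul_cancel_left, inv_mul_eq_iff_eq_mul,
    eq_comm (a := a * (b * (w * b⁻¹))), and_congr_right_iff]
  intro h1
  rw [show b * (w * b⁻¹) = a⁻¹ * w * (b⁻¹ * (a * b)) by rw [mul_assoc, h1, inv_mul_cancel_left],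
    ← mul_assoc w, mul_left_inj]
  exact (Commute.inv_left_iff (a := a) (b := w)).trans Commute.symm_iff

theorem commutator_eq_inv_iff (x y h : G) :
    x⁻¹ * y⁻¹ * x * y = h⁻¹ ↔ y⁻¹ * x⁻¹ * y * x = h := by
  rw [← inv_inj, inv_inv, show (x⁻¹ * y⁻¹ * x * y)⁻¹ = y⁻¹ * x⁻¹ * y * x by group]

end Commutators

theorem natCard_subtype_mul {α R : Type*} [Fintype α] [Semiring R] (p : α → Prop)
    [DecidablePred p] (c : R) : (Nat.card {x // p x} : R) * c = ∑ x, if p x then c else 0 := by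
  rw [Nat.card_eq_fintype_card, Fintype.card_subtype, Finset.sum_ite, Finset.sum_const_zero,
    add_zero, Finset.sum_const, nsmul_eq_mul]

section CommutingTriples

variable {G : Type} [Group G]

theorem f3_conj (u h : G) : f3 (u * h * u⁻¹) = f3 h := by
  let e := (MulAut.conj u).toEquiv
  refine (Nat.card_congr (Equiv.subtypeEquiv (e.prodCongr (e.prodCongr e)) fun t => ?_)).symm
  simp only [e, ← MulAut.conj_apply, Equiv.prodCongr_apply, Prod.map, MulEquiv.toEquiv_eq_coe,
    MulEquiv.coe_toEquiv, ← map_inv, ← map_mul, (MulAut.conj u).injective.eq_iff]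

theorem f3_inv (h : G) : f3 h⁻¹ = f3 h := by
  let e : G × G × G ≃ G × G × G :=
    ⟨fun t => (t.2.2, t.2.1, t.1), fun t => (t.2.2, t.2.1, t.1), fun _ => rfl, fun _ => rfl⟩
  refine Nat.card_congr (Equiv.subtypeEquiv e fun t => ?_)
  simp only [e, Equiv.coe_fn_mk, commutator_eq_inv_iff]
  tauto

variable [Fintype G] {R : Type*} [Semiring R]

theorem sum_f3_mul [DecidableEq G] (φ : G → R) :
    ∑ h, (f3 h : R) * φ h = ∑ t : G × G × G,
      if EqualCommutators t.1 t.2.1 t.2.2 then φ (t.1⁻¹ * t.2.1⁻¹ * t.1 * t.2.1) else 0 := by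
  simp only [f3, natCard_subtype_mul]
  rw [Finset.sum_comm]
  simp [EqualCommutators, ite_and]

theorem sum_centInt_mul (φ : G → R) :
    ∑ a, ∑ b, (centInt a b : R) * φ (a⁻¹ * b⁻¹ * a * b) = ∑ h, (f3 h : R) * φ h := by
  classical
  let e : G × G × G ≃ G × G × G :=
    { toFun := fun p => (p.2.1 * p.1, p.2.1, p.2.1 * p.2.2 * p.2.1⁻¹)
      invFun := fun t => (t.2.1⁻¹ * t.1, t.2.1, t.2.1⁻¹ * t.2.2 * t.2.1)
      left_inv := fun p => by simp [mul_assoc]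
      right_inv := fun t => by simp [mul_assoc] }
  simp only [centInt, Set.coe_ofPred, natCard_subtype_mul, ← Fintype.sum_prod_type', sum_f3_mul]
  refine Fintype.sum_equiv e _ _ fun ⟨a, b, w⟩ => ?_
  simp only [e, Equiv.coe_fn_mk, equalCommutators_mul_conj_iff,
    show (b * a)⁻¹ * b⁻¹ * (b * a) * b = a⁻¹ * b⁻¹ * a * b by group]

end CommutingTriples

namespace Subrepresentation

variable {k G M : Type*} [Field k] [Group G] [AddCommGroup M] [Module k M] [Module k[G] M]
  [IsScalarTower k k[G] M]

noncomputable def submoduleSubrepresentationOrderIso' :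
    Submodule k[G] M ≃o Subrepresentation (Representation.ofModule' (k := k) (G := G) M) where
  toFun N := ⟨N.restrictScalars k, fun g _ hv => N.smul_mem (MonoidAlgebra.of k G g) hv⟩
  invFun σ :=
    { σ.toSubmodule with
      smul_mem' := fun r m hm => by
        induction r using MonoidAlgebra.induction_on with
        | of g => exact σ.apply_mem_toSubmodule g hm
        | add x y hx hy => rw [add_smul]; exact σ.toSubmodule.add_mem hx hy
        | smul a x hx => rw [smul_assoc]; exact σ.toSubmodule.smul_mem a hx }
  left_inv _ := rfl
  right_inv _ := rfl
  map_rel_iff' := Iff.rfl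

end Subrepresentation

namespace Representation

variable {k G : Type*} [Field k] [Group G]

theorem isIrreducible_ofModule' (M : Type*) [AddCommGroup M] [Module k M] [Module k[G] M]
    [IsScalarTower k k[G] M] [IsSimpleModule k[G] M] :
    (ofModule' (k := k) (G := G) M).IsIrreducible :=
  Subrepresentation.submoduleSubrepresentationOrderIso'.isSimpleOrder_iff.mp inferInstance

theorem sum_mul_character_ofModule' [Fintype G] (M : Type*) [AddCommGroup M] [Module k M]
    [Module k[G] M] [IsScalarTower k k[G] M] [FiniteDimensional k M] (f : G → k) :
    ∑ x, f x * (ofModule' (k := k) (G := G) M).character x =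
      LinearMap.trace k M (Algebra.lsmul k k M (∑ x, f x • MonoidAlgebra.of k G x)) := by
  simp only [map_sum, map_smul, smul_eq_mul]
  rfl

end Representation

theorem MonoidAlgebra.commute_sum_smul_of {k G : Type*} [CommSemiring k] [Group G] [Fintype G]
    {f : G → k} (hf : ∀ u x, f (u * x * u⁻¹) = f x) (r : k[G]) :
    Commute (∑ x, f x • MonoidAlgebra.of k G x) r := by
  induction r using MonoidAlgebra.induction_on with
  | of g =>
    simp only [Commute, SemiconjBy, Finset.sum_mul, Finset.mul_sum, smul_mul_assoc, mul_smul_comm,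
      ← map_mul]
    refine Fintype.sum_equiv (MulAut.conj g⁻¹).toEquiv _ _ fun x => ?_
    simp only [MulEquiv.toEquiv_eq_coe, MulEquiv.coe_toEquiv, MulAut.conj_apply, inv_inv]
    rw [show g * (g⁻¹ * x * g) = x * g by group, ← hf g⁻¹ x, inv_inv]
  | add x y hx hy => exact hx.add_right hy
  | smul a x hx => exact hx.smul_right a

theorem IsSimpleModule.exists_smul_eq_smul_of_commute (k : Type*) {A M : Type*} [Field k]
    [IsAlgClosed k] [Ring A] [Algebra k A] [AddCommGroup M] [Module k M] [Module A M]
    [IsScalarTower k A M] [IsSimpleModule A M] [FiniteDimensional k M] {t : A}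
    (ht : ∀ r : A, Commute t r) : ∃ μ : k, ∀ m : M, t • m = μ • m := by
  obtain ⟨μ, hμ⟩ := (algebraMap_end_bijective_of_isAlgClosed k (A := A) (V := M)).2
    { toFun := (t • ·)
      map_add' := smul_add t
      map_smul' := fun r m => by simp only [smul_smul, (ht r).eq, RingHom.id_apply] }
  exact ⟨μ, fun m => by simpa using (LinearMap.congr_fun hμ m).symm⟩

theorem IsSemisimpleRing.eq_zero_of_forall_simple_mul_eq_zero {A : Type*} [Ring A]
    [IsSemisimpleRing A] {t : A}
    (h : ∀ S : Submodule A A, IsSimpleModule A S → ∀ s ∈ S, s * t = 0) : t = 0 := by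
  have : (⊤ : Submodule A A) ≤ LinearMap.ker (LinearMap.toSpanSingleton A A t) := by
    rw [← IsSemisimpleModule.sSup_simples_eq_top]
    exact sSup_le fun S hS s hs => h S hS s hs
  simpa using this (Submodule.mem_top (x := 1))

namespace FDRep

variable {k : Type u} [Field k] [IsAlgClosed k] [CharZero k]

theorem simple_of_isIrreducible {G : Type u} [Group G] [Fintype G] {V : Type u} [AddCommGroup V]
    [Module k V] [FiniteDimensional k V] (ρ : Representation k G V) [ρ.IsIrreducible] :
    Simple (FDRep.of ρ) := by
  have := invertibleOfNonzero (NeZero.ne (Nat.card G : k))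
  rw [simple_iff_char_is_norm_one]
  have h := Representation.char_orthonormal ρ ρ
  rw [if_pos ⟨Representation.Equiv.refl ρ⟩, inv_mul_eq_one₀ (NeZero.ne _)] at h
  exact h.symm

open Classical in
theorem sum_character_mul_character_inv {G : Type u} [Group G] [Fintype G] (V W : FDRep k G)
    [Simple V] [Simple W] : ∑ x, V.character x * W.character x⁻¹ =
      if V.character = W.character then (Nat.card G : k) else 0 := by
  have := invertibleOfNonzero (NeZero.ne (Nat.card G : k))
  have hcard : (Nat.card G : k) ≠ 0 := NeZero.ne _
  by_cases hVW : V.character = W.character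
  · have hVV := char_orthonormal V V
    rw [if_pos ⟨Iso.refl V⟩, inv_mul_eq_one₀ hcard] at hVV
    rw [if_pos hVW, ← hVW, hVV]
  · have hVW' := char_orthonormal V W
    rw [if_neg fun ⟨i⟩ => hVW (char_iso i), mul_eq_zero, inv_eq_zero] at hVW'
    simpa [hVW, hcard] using hVW'

theorem eq_zero_of_forall_sum_mul_character_eq_zero {G : Type u} [Group G] [Fintype G]
    {f : G → k} (hf : ∀ u x, f (u * x * u⁻¹) = f x)
    (h : ∀ V : FDRep k G, Simple V → ∑ x, f x * V.character x = 0) : f = 0 := by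
  set t : k[G] := ∑ x, f x • MonoidAlgebra.of k G x
  have ht := MonoidAlgebra.commute_sum_smul_of hf
  suffices t = 0 by
    classical
    ext x
    simpa [t, Finsupp.single_apply] using congr(($this).coeff x)
  refine IsSemisimpleRing.eq_zero_of_forall_simple_mul_eq_zero fun S _ s hs => ?_
  obtain ⟨μ, hμ⟩ := IsSimpleModule.exists_smul_eq_smul_of_commute k (M := S) ht
  have hμ0 : μ = 0 := by
    have := Representation.isIrreducible_ofModule' (k := k) (G := G) S
    have : Nontrivial S := IsSimpleModule.nontrivial k[G] S
    have htr := h _ (simple_of_isIrreducible (Representation.ofModule' S))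
    change ∑ x, f x * (Representation.ofModule' S).character x = 0 at htr
    rw [Representation.sum_mul_character_ofModule', show Algebra.lsmul k k S t = μ • .id from
      LinearMap.ext hμ] at htr
    simpa [Module.finrank_pos.ne'] using htr
  rw [← (ht s).eq]
  simpa [hμ0] using congrArg Subtype.val (hμ ⟨s, hs⟩)

end FDRep

namespace IsIrredChar

variable {G : Type} [Group G] {χ ψ : G → ℂ}

theorem conj_apply (hχ : IsIrredChar G χ) (u x : G) : χ (u * x * u⁻¹) = χ x := by
  obtain ⟨V, -, rfl⟩ := hχ
  exact FDRep.char_conj V x u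

open Classical in
theorem sum_mul_apply_inv [Fintype G] (hχ : IsIrredChar G χ) (hψ : IsIrredChar G ψ) :
    ∑ x, χ x * ψ x⁻¹ = if χ = ψ then (Fintype.card G : ℂ) else 0 := by
  obtain ⟨V, _, rfl⟩ := hχ
  obtain ⟨W, _, rfl⟩ := hψ
  rw [FDRep.sum_character_mul_character_inv V W, Nat.card_eq_fintype_card]

end IsIrredChar

theorem eq_sum_irr_of_conj_invariant {G : Type} [Group G] [Fintype G] (Irr : Finset (G → ℂ))
    (hIrr : ∀ χ, χ ∈ Irr ↔ IsIrredChar G χ) {F : G → ℂ} (hF : ∀ u x, F (u * x * u⁻¹) = F x)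
    (g : G) : F g = (1 / (Fintype.card G : ℂ)) * ∑ χ ∈ Irr, (∑ x, F x * χ x⁻¹) * χ g := by
  set c : (G → ℂ) → ℂ := fun χ => ∑ x, F x * χ x⁻¹
  set D : G → ℂ := fun x => F x - 1 / Fintype.card G * ∑ χ ∈ Irr, c χ * χ x
  have hn : (Fintype.card G : ℂ) ≠ 0 := Nat.cast_ne_zero.mpr Fintype.card_ne_zero
  have horth : ∀ ψ ∈ Irr, ∑ x, D x * ψ x⁻¹ = 0 := by
    intro ψ hψ
    calc ∑ x, D x * ψ x⁻¹ = c ψ - 1 / Fintype.card G * ∑ χ ∈ Irr, c χ * ∑ x, χ x * ψ x⁻¹ := by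
          simp only [D, c, sub_mul, Finset.sum_sub_distrib, Finset.sum_mul, Finset.mul_sum,
            mul_assoc]
          rw [Finset.sum_comm]
      _ = c ψ - 1 / Fintype.card G * (c ψ * Fintype.card G) := by
          rw [Finset.sum_congr rfl fun χ hχ => by
            rw [((hIrr χ).1 hχ).sum_mul_apply_inv ((hIrr ψ).1 hψ)]]
          simp only [mul_ite, mul_zero, Finset.sum_ite_eq', if_pos hψ]
      _ = 0 := by rw [mul_comm (c ψ), ← mul_assoc, one_div_mul_cancel hn, one_mul, sub_self]
  have hD : (fun x => D x⁻¹) = 0 := by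
    refine FDRep.eq_zero_of_forall_sum_mul_character_eq_zero (fun u x => ?_) fun V hV => ?_
    · simp only [D, show (u * x * u⁻¹)⁻¹ = u * x⁻¹ * u⁻¹ by group, hF]
      rw [Finset.sum_congr rfl fun χ hχ => by rw [((hIrr χ).1 hχ).conj_apply u]]
    · rw [← Equiv.sum_comp (Equiv.inv G)]
      simpa using horth V.character ((hIrr _).2 ⟨V, hV, rfl⟩)
  simpa [D, sub_eq_zero] using congr_fun hD g⁻¹

theorem stmt0 {G : Type} [Group G] [Fintype G]
    (Irr : Finset (G → ℂ)) (hIrr : ∀ χ, χ ∈ Irr ↔ IsIrredChar G χ) (g : G) :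
    (f3 g : ℂ) = (1 / (Fintype.card G : ℂ)) *
      ∑ χ ∈ Irr, (∑ a : G, ∑ b : G,
        (centInt a b : ℂ) * χ (a⁻¹ * b⁻¹ * a * b)) * χ g := by
  refine (eq_sum_irr_of_conj_invariant Irr hIrr (F := fun h => (f3 h : ℂ))
    (fun u x => by simp only [f3_conj]) g).trans ?_
  congr 1
  refine Finset.sum_congr rfl fun χ _ => ?_
  rw [sum_centInt_mul, ← Equiv.sum_comp (Equiv.inv G)]
  simp [f3_inv]
end

section
/- Let G be a finite group and χ a complex irreducible character of G. The function θ_χ defined by θ_χ(a) = Σ_{b∈G} |C_G(ab)b ∩ C_G(a)| · χ([a,b]) is a class function on G, i.e. θ_χ(w⁻¹aw) = θ_χ(a) for all a, w ∈ G. -/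
/-- `θ_χ(a) = ∑_{b ∈ G} |C_G(ab)b ∩ C_G(a)| • χ([a,b])`, with `[a,b] = a⁻¹b⁻¹ab`. -/
noncomputable def theta {G : Type} [Group G] [Fintype G] (χ : G → ℂ) (a : G) : ℂ :=
  ∑ b : G, (centInt a b : ℂ) * χ (a⁻¹ * b⁻¹ * a * b)

lemma conj_mem_cent {G : Type} [Group G] {g x : G} (w : G)
    (h : x ∈ Subgroup.centralizer ({g} : Set G)) :
    w * x * w⁻¹ ∈ Subgroup.centralizer ({w * g * w⁻¹} : Set G) := by
  rw [Subgroup.mem_centralizer_singleton_iff] at h ⊢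
  have e1 : w * x * w⁻¹ * (w * g * w⁻¹) = w * (x * g) * w⁻¹ := by group
  have e2 : w * g * w⁻¹ * (w * x * w⁻¹) = w * (g * x) * w⁻¹ := by group
  rw [e1, e2, h]

lemma conj_mem_cent' {G : Type} [Group G] {g x : G} (w : G)
    (h : x ∈ Subgroup.centralizer ({g} : Set G)) :
    w⁻¹ * x * w ∈ Subgroup.centralizer ({w⁻¹ * g * w} : Set G) := by
  have := conj_mem_cent w⁻¹ h
  rwa [inv_inv] at this

lemma centInt_conj {G : Type} [Group G] (a b w : G) :
    centInt (w⁻¹ * a * w) (w⁻¹ * b * w) = centInt a b := by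
  unfold centInt
  apply Nat.card_congr
  refine ⟨fun x => ⟨w * x.1 * w⁻¹, ?_, ?_⟩, fun y => ⟨w⁻¹ * y.1 * w, ?_, ?_⟩, ?_, ?_⟩
  · have h := conj_mem_cent w x.2.1
    rw [show w * (↑x * (w⁻¹ * b * w)⁻¹) * w⁻¹ = w * ↑x * w⁻¹ * b⁻¹ from by group,
        show w * (w⁻¹ * a * w * (w⁻¹ * b * w)) * w⁻¹ = a * b from by group] at h
    exact h
  · have h := conj_mem_cent w x.2.2
    rw [show w * (w⁻¹ * a * w) * w⁻¹ = a from by group] at h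
    exact h
  · have h := conj_mem_cent' w y.2.1
    rw [show w⁻¹ * (↑y * b⁻¹) * w = w⁻¹ * ↑y * w * (w⁻¹ * b * w)⁻¹ from by group,
        show w⁻¹ * (a * b) * w = w⁻¹ * a * w * (w⁻¹ * b * w) from by group] at h
    exact h
  · exact conj_mem_cent' w y.2.2
  · intro x; apply Subtype.ext; show w⁻¹ * (w * ↑x * w⁻¹) * w = ↑x; group
  · intro y; apply Subtype.ext; show w * (w⁻¹ * ↑y * w) * w⁻¹ = ↑y; group

theorem stmt1 {G : Type} [Group G] [Fintype G]
    (V : FDRep ℂ G) (hV : CategoryTheory.Simple V) (a w : G) :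
    theta V.character (w⁻¹ * a * w) = theta V.character a := by
  unfold theta
  apply Fintype.sum_equiv (MulAut.conj w).toEquiv
  intro b
  simp only [MulAut.conj_apply, MulEquiv.toEquiv_eq_coe, EquivLike.coe_coe]
  have h1 : centInt (w⁻¹ * a * w) b = centInt a (w * b * w⁻¹) := by
    rw [← centInt_conj a (w * b * w⁻¹) w]
    congr 1
    group
  have h2 : V.character ((w⁻¹ * a * w)⁻¹ * b⁻¹ * (w⁻¹ * a * w) * b)
      = V.character (a⁻¹ * (w * b * w⁻¹)⁻¹ * a * (w * b * w⁻¹)) := by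
    rw [show (w⁻¹ * a * w)⁻¹ * b⁻¹ * (w⁻¹ * a * w) * b
        = w⁻¹ * (a⁻¹ * (w * b * w⁻¹)⁻¹ * a * (w * b * w⁻¹)) * w⁻¹⁻¹ from by group]
    exact FDRep.char_conj V _ w⁻¹
  rw [h1, h2]
end

section
/- Let G be a finite group and let x_1, …, x_{k(G)} be a full set of representatives of the conjugacy classes of G. For every complex irreducible character χ of G, ⟨t_3, χ⟩ = Σ_{i=1}^{k(G)} (|G|/χ(1)) · |χ(x_i)|². -/
/-- the number of ordered triples `(x,y,z)` with `[x,y] = g = [x,z]`,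
where `[x,y] = x⁻¹y⁻¹xy`. -/
noncomputable def t3 {G : Type} [Group G] (g : G) : ℕ :=
  Nat.card {t : G × G × G //
    t.1⁻¹ * t.2.1⁻¹ * t.1 * t.2.1 = g ∧
    t.1⁻¹ * t.2.2⁻¹ * t.1 * t.2.2 = g}

open Finset Module LinearMap CategoryTheory Representation

theorem LinearMap.trace_eq_sum_mul_finrank_of_isInternal {K V ι : Type*} [Field K]
    [AddCommGroup V] [Module K V] [FiniteDimensional K V] [DecidableEq ι] {N : ι → Submodule K V}
    (hN : DirectSum.IsInternal N) (hfin : {i | N i ≠ ⊥}.Finite) {f : Module.End K V}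
    (c : ι → K) (hf : ∀ i, ∀ v ∈ N i, f v = c i • v) :
    trace K V f = ∑ i ∈ hfin.toFinset, c i * finrank K (N i) := by
  have hmaps : ∀ i, Set.MapsTo f (N i) (N i) := fun i v hv => by
    rw [SetLike.mem_coe, hf i v hv]; exact (N i).smul_mem _ hv
  rw [trace_eq_sum_trace_restrict' hN hfin hmaps]
  refine Finset.sum_congr rfl fun i _ => ?_
  have : f.restrict (hmaps i) = c i • LinearMap.id := by
    ext v; exact hf i v v.2
  rw [this, map_smul, trace_id, smul_eq_mul]

theorem LinearMap.trace_eq_conj_trace_of_pow_eq_one {V : Type*} [AddCommGroup V] [Module ℂ V]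
    [FiniteDimensional ℂ V] {f g : Module.End ℂ V} {n : ℕ} (hn : n ≠ 0) (hf : f ^ n = 1)
    (hgf : g * f = 1) : trace ℂ V g = starRingEnd ℂ (trace ℂ V f) := by
  -- `X ^ n - 1` is squarefree, so `f` is diagonalizable with roots of unity as eigenvalues,
  -- and `g` acts on the `μ`-eigenspace of `f` by `μ⁻¹ = conj μ`.
  have hsq : Squarefree ((Polynomial.X : Polynomial ℂ) ^ n - 1) :=
    (Polynomial.X_pow_sub_one_separable_iff.mpr (Nat.cast_ne_zero.mpr hn)).squarefree
  have hss : f.IsSemisimple := Module.End.isSemisimple_of_squarefree_aeval_eq_zero hsq (by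
    simp [hf])
  have hindep := f.eigenspaces_iSupIndep
  have hInt := DirectSum.isInternal_submodule_of_iSupIndep_of_iSup_eq_top hindep
    hss.iSup_eigenspace_eq_top
  have hfin := WellFoundedGT.finite_ne_bot_of_iSupIndep hindep
  have hg : ∀ μ, ∀ v ∈ f.eigenspace μ, g v = μ⁻¹ • v := fun μ v hv => by
    have hv' : v = μ • g v := by
      rw [← map_smul, ← Module.End.mem_eigenspace_iff.mp hv, ← Module.End.mul_apply, hgf,
        Module.End.one_apply]
    rcases eq_or_ne μ 0 with rfl | hμ
    · rw [zero_smul] at hv'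
      simp [hv']
    · rw [hv', smul_smul, inv_mul_cancel₀ hμ, one_smul, ← hv']
  rw [trace_eq_sum_mul_finrank_of_isInternal hInt hfin _ hg,
    trace_eq_sum_mul_finrank_of_isInternal hInt hfin (fun μ => μ)
      (fun μ v hv => Module.End.mem_eigenspace_iff.mp hv), map_sum]
  refine Finset.sum_congr rfl fun μ hμ => ?_
  have hμ' : f.HasEigenvalue μ := hfin.mem_toFinset.mp hμ
  obtain ⟨v, hv⟩ := hμ'.exists_hasEigenvector
  have hμn : μ ^ n = 1 := smul_left_injective ℂ hv.2 <| by
    simpa [hf] using (hv.pow_apply n).symm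
  simp [Complex.inv_eq_conj (Complex.norm_eq_one_of_pow_eq_one hμn hn)]

namespace FDRep

variable {k G : Type} [Field k] [Group G]

theorem nontrivial_of_simple (V : FDRep k G) [Simple V] : Nontrivial V := by
  by_contra h
  have : Subsingleton V := not_nontrivial_iff_subsingleton.mp h
  exact id_nonzero V (Action.hom_ext _ _ (by ext v; exact Subsingleton.elim _ _))

theorem exists_eq_smul_id_of_commute [IsAlgClosed k] (V : FDRep k G) [Simple V]
    {T : V →ₗ[k] V} (hT : ∀ g, Commute (V.ρ g) T) : ∃ c : k, T = c • LinearMap.id := by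
  have := nontrivial_of_simple V
  have mem_inv : ∀ S : V →ₗ[k] V, (∀ g, Commute (V.ρ g) S) → S ∈ (linHom V.ρ V.ρ).invariants :=
    fun S hS g => by
      change V.ρ g * S * V.ρ g⁻¹ = S
      rw [(hS g).eq, mul_assoc, ← map_mul, mul_inv_cancel, map_one, mul_one]
  have hid : (⟨LinearMap.id, mem_inv _ fun g => Commute.one_right _⟩ :
      (linHom V.ρ V.ρ).invariants) ≠ 0 := by
    obtain ⟨v, hv⟩ := exists_ne (0 : V)
    exact fun h => hv (congrArg (fun S : (linHom V.ρ V.ρ).invariants => (S : V →ₗ[k] V) v) h)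
  have hrank : finrank k (linHom V.ρ V.ρ).invariants = 1 := by
    rw [(linHom.invariantsEquivFDRepHom V V).finrank_eq, finrank_endomorphism_simple_eq_one]
  obtain ⟨c, hc⟩ := (finrank_eq_one_iff_of_nonzero' _ hid).mp hrank ⟨T, mem_inv T hT⟩
  exact ⟨c, congrArg Subtype.val hc.symm⟩

theorem char_one_mul_sum_char_mul_conj [IsAlgClosed k] [Fintype G] (V : FDRep k G) [Simple V]
    (a b : G) :
    V.character 1 * ∑ y, V.character (a * (y * b * y⁻¹)) =
      Fintype.card G * V.character a * V.character b := by
  set T : V →ₗ[k] V := ∑ y, V.ρ (y * b * y⁻¹)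
  have hT : ∀ g, Commute (V.ρ g) T := fun g => by
    simp only [Commute, SemiconjBy, T, Finset.mul_sum, Finset.sum_mul]
    refine Fintype.sum_equiv (Equiv.mulLeft g) _ _ fun y => ?_
    rw [← map_mul, ← map_mul, Equiv.coe_mulLeft]
    group
  obtain ⟨c, hc⟩ := exists_eq_smul_id_of_commute V hT
  have hscalar : ∀ g, trace k V (V.ρ g * T) = c * V.character g := fun g => by
    rw [hc, Module.End.mul_eq_comp, comp_smul, comp_id, map_smul, smul_eq_mul, character]
  have htrace : c * V.character 1 = Fintype.card G * V.character b := by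
    calc c * V.character 1 = ∑ y, V.character (y * b * y⁻¹) := by
          rw [← hscalar, map_one, one_mul, map_sum]; rfl
      _ = Fintype.card G * V.character b := by simp
  have hsum : ∑ y, V.character (a * (y * b * y⁻¹)) = trace k V (V.ρ a * T) := by
    simp only [T, Finset.mul_sum, map_sum, ← map_mul]; rfl
  rw [hsum, hscalar]
  linear_combination (V.character a) * htrace

theorem char_inv (V : FDRep ℂ G) [Finite G] (g : G) :
    V.character g⁻¹ = starRingEnd ℂ (V.character g) :=
  trace_eq_conj_trace_of_pow_eq_one (Nat.card_pos (α := G)).ne'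
    (by rw [← map_pow, pow_card_eq_one', map_one]) (by rw [← map_mul, inv_mul_cancel, map_one])

theorem char_one_ne_zero (V : FDRep ℂ G) [Simple V] : V.character 1 ≠ 0 := by
  have := nontrivial_of_simple V
  rw [char_one]
  exact Nat.cast_ne_zero.mpr finrank_pos.ne'

theorem char_one_mul_sum_star_char_commutator [Fintype G] (V : FDRep ℂ G) [Simple V] (x : G) :
    V.character 1 * ∑ y, starRingEnd ℂ (V.character (x⁻¹ * y⁻¹ * x * y)) =
      Fintype.card G * (‖V.character x‖ : ℂ) ^ 2 := by
  have hsum : ∑ y, V.character (x⁻¹ * y⁻¹ * x * y) = ∑ y, V.character (x⁻¹ * (y * x * y⁻¹)) :=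
    Fintype.sum_equiv (Equiv.inv G) _ _ fun y => by simp [mul_assoc]
  have hreal : starRingEnd ℂ (V.character 1) = V.character 1 := by simp [char_one]
  rw [← hreal, ← map_sum, ← map_mul, hsum, char_one_mul_sum_char_mul_conj, char_inv,
    ← Complex.mul_conj']
  simp only [map_mul, map_natCast, Complex.conj_conj]
  ring

end FDRep

theorem Finset.sum_card_fiber_smul {α β M : Type*} [Fintype α] [Fintype β] [DecidableEq β]
    [AddCommMonoid M] (h : α → β) (F : β → M) :
    ∑ b, #{a | h a = b} • F b = ∑ a, F (h a) := by
  rw [← sum_fiberwise univ h]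
  refine sum_congr rfl fun b _ => ?_
  rw [← sum_const]
  exact sum_congr rfl fun a ha => by rw [(mem_filter.mp ha).2]

section Counting

variable {G : Type} [Group G] [Fintype G] [DecidableEq G]

theorem card_conj_eq_eq_card_commute (x y₀ : G) :
    #{y | y⁻¹ * x * y = y₀⁻¹ * x * y₀} = #{w | x * w = w * x} := by
  have key : ∀ w, (w * y₀)⁻¹ * x * (w * y₀) = y₀⁻¹ * x * y₀ ↔ x * w = w * x := fun w => by
    rw [show (w * y₀)⁻¹ * x * (w * y₀) = y₀⁻¹ * (w⁻¹ * x * w) * y₀ by group, mul_left_inj,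
      mul_right_inj, mul_assoc, inv_mul_eq_iff_eq_mul, eq_comm]
  refine card_nbij' (· * y₀⁻¹) (· * y₀) (fun y hy => ?_) (fun w hw => ?_) (fun y _ => ?_)
    (fun w _ => ?_)
  · simp only [mem_coe, mem_filter, mem_univ, true_and] at hy ⊢
    rwa [← key, inv_mul_cancel_right]
  · simp only [mem_coe, mem_filter, mem_univ, true_and] at hw ⊢
    exact (key w).mpr hw
  · simp
  · simp

theorem sq_card_commutator_eq (x g : G) :
    #{y | x⁻¹ * y⁻¹ * x * y = g} ^ 2 = #{w | x * w = w * x} * #{y | x⁻¹ * y⁻¹ * x * y = g} := by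
  rcases eq_or_ne #{y | x⁻¹ * y⁻¹ * x * y = g} 0 with h | h
  · simp [h]
  obtain ⟨y₀, hy₀⟩ := card_ne_zero.mp h
  rw [mem_filter] at hy₀
  have hfiber : ∀ y, x⁻¹ * y⁻¹ * x * y = g ↔ y⁻¹ * x * y = y₀⁻¹ * x * y₀ := fun y => by
    simp only [← hy₀.2, mul_assoc x⁻¹, mul_right_inj]
  rw [sq]
  congr 1
  rw [filter_congr fun y _ => hfiber y, card_conj_eq_eq_card_commute]

theorem t3_eq_sum_sq (g : G) : t3 g = ∑ x, #{y | x⁻¹ * y⁻¹ * x * y = g} ^ 2 := by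
  rw [t3, Nat.card_eq_fintype_card, Fintype.card_subtype, card_filter, Fintype.sum_prod_type]
  refine sum_congr rfl fun x _ => ?_
  rw [Fintype.sum_prod_type, sq, card_filter, sum_mul_sum]
  simp only [ite_zero_mul_ite_zero, mul_one]

theorem sum_t3_mul {R : Type*} [CommSemiring R] (F : G → R) :
    ∑ g, (t3 g : R) * F g = ∑ x, (#{w | x * w = w * x} : R) * ∑ y, F (x⁻¹ * y⁻¹ * x * y) := by
  simp_rw [t3_eq_sum_sq, sq_card_commutator_eq, Nat.cast_sum, sum_mul]
  rw [sum_comm]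
  refine sum_congr rfl fun x _ => ?_
  rw [← sum_card_fiber_smul, mul_sum]
  simp only [Nat.cast_mul, nsmul_eq_mul, mul_assoc]

theorem card_conj_mem_eq_card_commute (reps : Finset G)
    (hreps : ∀ g : G, ∃! x, x ∈ reps ∧ IsConj x g) (x : G) :
    #{y | y⁻¹ * x * y ∈ reps} = #{w | x * w = w * x} := by
  obtain ⟨r, ⟨hr, hrx⟩, huniq⟩ := hreps x
  obtain ⟨y₀, rfl⟩ : ∃ y₀, y₀⁻¹ * x * y₀ = r := by
    obtain ⟨c, hc⟩ := isConj_iff.mp hrx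
    exact ⟨c, by rw [← hc]; group⟩
  rw [← card_conj_eq_eq_card_commute x y₀]
  refine congrArg card (filter_congr fun y _ => ⟨fun hy => huniq _ ⟨hy, ?_⟩, fun hy => hy ▸ hr⟩)
  exact isConj_iff.mpr ⟨y, by group⟩

theorem sum_card_commute_smul {M : Type*} [AddCommMonoid M] (reps : Finset G)
    (hreps : ∀ g : G, ∃! x, x ∈ reps ∧ IsConj x g) (f : G → M)
    (hf : ∀ x y, IsConj x y → f x = f y) :
    ∑ x, #{w | x * w = w * x} • f x = Fintype.card G • ∑ r ∈ reps, f r := by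
  have hconj : ∀ y, ∑ x with y⁻¹ * x * y ∈ reps, f x = ∑ r ∈ reps, f r := fun y => by
    rw [sum_filter, ← Fintype.sum_ite_mem reps]
    refine Fintype.sum_equiv (M := M) (MulAut.conj y⁻¹).toEquiv _ _ fun x => ?_
    simp only [MulEquiv.toEquiv_eq_coe, EquivLike.coe_coe, MulAut.conj_apply, inv_inv]
    split_ifs
    · exact hf _ _ (isConj_iff.mpr ⟨y⁻¹, by group⟩)
    · rfl
  calc ∑ x, #{w | x * w = w * x} • f x = ∑ x, #{y | y⁻¹ * x * y ∈ reps} • f x := by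
        simp only [card_conj_mem_eq_card_commute reps hreps]
    _ = ∑ y : G, ∑ x with y⁻¹ * x * y ∈ reps, f x := by
        simp only [← sum_const, sum_filter]
        rw [sum_comm]
    _ = Fintype.card G • ∑ r ∈ reps, f r := by
        simp [hconj]

end Counting

theorem stmt2 {G : Type} [Group G] [Fintype G]
    (reps : Finset G) (hreps : ∀ g : G, ∃! x, x ∈ reps ∧ IsConj x g)
    (χ : G → ℂ) (hχ : IsIrredChar G χ) :
    (1 / (Fintype.card G : ℂ)) * ∑ g : G, (t3 g : ℂ) * (starRingEnd ℂ) (χ g)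
      = ∑ x ∈ reps, ((Fintype.card G : ℂ) / χ 1) * ((‖χ x‖ : ℝ) : ℂ) ^ 2 := by
  classical
  obtain ⟨V, hV, rfl⟩ := hχ
  have hcard : (Fintype.card G : ℂ) ≠ 0 := Nat.cast_ne_zero.mpr Fintype.card_ne_zero
  have hinner : ∀ x, ∑ y, starRingEnd ℂ (V.character (x⁻¹ * y⁻¹ * x * y)) =
      (Fintype.card G : ℂ) / V.character 1 * ((‖V.character x‖ : ℝ) : ℂ) ^ 2 := fun x => by
    rw [div_mul_eq_mul_div, eq_div_iff (FDRep.char_one_ne_zero V), mul_comm,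
      FDRep.char_one_mul_sum_star_char_commutator]
  simp_rw [sum_t3_mul, hinner, ← nsmul_eq_mul]
  rw [sum_card_commute_smul reps hreps _ fun x y h => ?_, nsmul_eq_mul, ← mul_assoc, one_div,
    inv_mul_cancel₀ hcard, one_mul]
  obtain ⟨c, rfl⟩ := isConj_iff.mp h
  rw [FDRep.char_conj]
end

section
/- Let n ≥ 3 and let g be any element of the alternating group A_n. Then there exist permutations x₁, x₂, x₃ in the symmetric group Σ_n such that [x₁,x₂] = g, [x₁,x₃] = g, and [x₂,x₃] = g, where [x,y] = x⁻¹y⁻¹xy. -/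
open Equiv Equiv.Perm Finset

variable {α : Type*} [Fintype α] [DecidableEq α]

def IsPaired (g b c : Perm α) : Prop :=
  b * b = 1 ∧ c * c = 1 ∧ b * c = g ∧ b.support ⊆ g.support ∧ c.support ⊆ g.support

def GoodPerm (g : Perm α) : Prop :=
  (Perm.sign g = 1 → ∃ b c : Perm α, IsPaired g b c ∧ b.support.card = c.support.card) ∧
  (Perm.sign g ≠ 1 →
    (∃ b c : Perm α, IsPaired g b c ∧ b.support.card + 2 = c.support.card) ∧
    (∃ b c : Perm α, IsPaired g b c ∧ c.support.card + 2 = b.support.card))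

lemma isPaired_mul {σ τ b₁ c₁ b₂ c₂ : Perm α} (hd : Perm.Disjoint σ τ)
    (h₁ : IsPaired σ b₁ c₁) (h₂ : IsPaired τ b₂ c₂) :
    IsPaired (σ * τ) (b₁ * b₂) (c₁ * c₂) ∧
    (b₁ * b₂).support.card = b₁.support.card + b₂.support.card ∧
    (c₁ * c₂).support.card = c₁.support.card + c₂.support.card := by
  obtain ⟨hb₁, hc₁, h₁p, hb₁s, hc₁s⟩ := h₁
  obtain ⟨hb₂, hc₂, h₂p, hb₂s, hc₂s⟩ := h₂
  have hds := Equiv.Perm.disjoint_iff_disjoint_support.mp hd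
  have dis : ∀ {u v : Perm α}, u.support ⊆ σ.support → v.support ⊆ τ.support →
      Perm.Disjoint u v := fun hu hv =>
    Equiv.Perm.disjoint_iff_disjoint_support.mpr (hds.mono hu hv)
  have dbb : Perm.Disjoint b₁ b₂ := dis hb₁s hb₂s
  have dcc : Perm.Disjoint c₁ c₂ := dis hc₁s hc₂s
  have dcb : Perm.Disjoint c₁ b₂ := dis hc₁s hb₂s
  have hsupp : (σ * τ).support = σ.support ∪ τ.support := hd.support_mul
  constructor
  · refine ⟨?_, ?_, ?_, ?_, ?_⟩
    · calc b₁ * b₂ * (b₁ * b₂) = b₁ * b₁ * (b₂ * b₂) := by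
            rw [mul_assoc, mul_assoc, ← mul_assoc b₂, dbb.commute.symm.eq, mul_assoc]
      _ = 1 := by rw [hb₁, hb₂, one_mul]
    · calc c₁ * c₂ * (c₁ * c₂) = c₁ * c₁ * (c₂ * c₂) := by
            rw [mul_assoc, mul_assoc, ← mul_assoc c₂, dcc.commute.symm.eq, mul_assoc]
      _ = 1 := by rw [hc₁, hc₂, one_mul]
    · calc b₁ * b₂ * (c₁ * c₂) = (b₁ * c₁) * (b₂ * c₂) := by
            rw [mul_assoc, mul_assoc, ← mul_assoc b₂, dcb.symm.commute.eq, mul_assoc]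
      _ = σ * τ := by rw [h₁p, h₂p]
    · refine (support_mul_le _ _).trans ?_
      rw [hsupp]; exact sup_le_sup hb₁s hb₂s
    · refine (support_mul_le _ _).trans ?_
      rw [hsupp]; exact sup_le_sup hc₁s hc₂s
  constructor
  · rw [dbb.support_mul, card_union_of_disjoint (hds.mono hb₁s hb₂s)]
  · rw [dcc.support_mul, card_union_of_disjoint (hds.mono hc₁s hc₂s)]

lemma goodPerm_cycle {σ : Perm α} (hσ : IsCycle σ) : GoodPerm σ := by
  classical
  obtain ⟨a, ha, hall⟩ := id hσ
  set k : ℕ := σ.support.card with hk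
  have hk2 : 2 ≤ k := hσ.two_le_card_support
  have ham : a ∈ σ.support := mem_support.mpr ha
  have hcyc : σ.IsCycleOn ↑σ.support := by
    rw [coe_support_eq_set_support]; exact hσ.isCycleOn
  have KL2 : ∀ i j : ℤ, (σ ^ i) a = (σ ^ j) a ↔ (k : ℤ) ∣ i - j := by
    intro i j
    rw [hcyc.zpow_apply_eq_zpow_apply ham]
    constructor
    · intro h; simpa using h.symm.dvd
    · intro h; exact (Int.modEq_iff_dvd.mpr (by simpa using h)).symm
  have rep : ∀ x ∈ σ.support, ∃ i : ℤ, (σ ^ i) a = x := fun x hx =>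
    hσ.exists_zpow_eq ha (mem_support.mp hx)
  set ix : α → ℤ := fun x => if hx : x ∈ σ.support then (rep x hx).choose else 0 with hixdef
  have hix : ∀ x (hx : x ∈ σ.support), (σ ^ ix x) a = x := by
    intro x hx
    simp only [hixdef, dif_pos hx]
    exact (rep x hx).choose_spec
  set f : α → α := fun x => if x ∈ σ.support then (σ ^ (-ix x)) a else x with hfdef
  have hmem : ∀ i : ℤ, (σ ^ i) a ∈ σ.support := fun i => zpow_apply_mem_support.mpr ham
  have L1 : ∀ i : ℤ, f ((σ ^ i) a) = (σ ^ (-i)) a := by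
    intro i
    have hx := hmem i
    simp only [hfdef, if_pos hx]
    rw [KL2]
    have h1 : (k : ℤ) ∣ ix ((σ ^ i) a) - i := (KL2 _ _).mp (hix _ hx)
    rw [show -ix ((σ ^ i) a) - -i = -(ix ((σ ^ i) a) - i) by ring]
    exact dvd_neg.mpr h1
  have L2 : ∀ x, x ∉ σ.support → f x = x := by
    intro x hx; simp only [hfdef, if_neg hx]
  have hf : Function.Involutive f := by
    intro x
    by_cases hx : x ∈ σ.support
    · obtain ⟨i, hi⟩ := rep x hx
      rw [← hi, L1, L1, neg_neg]
    · rw [L2 x hx, L2 x hx]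
  set b : Perm α := hf.toPerm f with hbdef
  have hbapp : ∀ x, b x = f x := fun x => rfl
  have E1 : ∀ j i : ℤ, (b * σ ^ j) ((σ ^ i) a) = (σ ^ (-(i + j))) a := by
    intro j i
    rw [mul_apply, ← mul_apply (σ ^ j), ← zpow_add, hbapp, L1, add_comm]
  have E2 : ∀ (j : ℤ) (x), x ∉ σ.support → (b * σ ^ j) x = x := by
    intro j x hx
    rw [mul_apply, zpow_apply_eq_self_of_apply_eq_self (notMem_support.mp hx), hbapp, L2 x hx]
  have E3 : ∀ j : ℤ, (b * σ ^ j) * (b * σ ^ j) = 1 := by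
    intro j
    ext x
    by_cases hx : x ∈ σ.support
    · obtain ⟨i, hi⟩ := rep x hx
      rw [mul_apply, ← hi, E1, E1, show -(-(i + j) + j) = i from by ring, one_apply]
    · rw [mul_apply, E2 j x hx, E2 j x hx, one_apply]
  have E6 : ∀ j : ℤ, (b * σ ^ j) * (b * σ ^ (j + 1)) = σ := by
    intro j
    ext x
    by_cases hx : x ∈ σ.support
    · obtain ⟨i, hi⟩ := rep x hx
      have hs : σ ((σ ^ i) a) = (σ ^ (i + 1)) a := by
        rw [← mul_apply, ← zpow_one_add, add_comm]
      rw [mul_apply, ← hi, E1, E1, show -(-(i + (j + 1)) + j) = i + 1 from by ring, hs]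
    · rw [mul_apply, E2 _ x hx, E2 _ x hx, notMem_support.mp hx]
  have E4 : ∀ j : ℤ, (b * σ ^ j).support ⊆ σ.support := by
    intro j x hx
    by_contra h
    exact (mem_support.mp hx) (E2 j x h)
  set F : ℤ → Finset α := fun j => σ.support.filter (fun x => (b * σ ^ j) x = x) with hFdef
  have E5 : ∀ j : ℤ, (b * σ ^ j).support = σ.support \ F j := by
    intro j
    ext x
    constructor
    · intro h
      have hfix : (b * σ ^ j) x ≠ x := mem_support.mp h
      have hxs : x ∈ σ.support := by by_contra hc; exact hfix (E2 j x hc)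
      rw [mem_sdiff]
      exact ⟨hxs, fun hc => hfix (mem_filter.mp hc).2⟩
    · intro h
      rw [mem_sdiff] at h
      exact mem_support.mpr fun hc => h.2 (mem_filter.mpr ⟨h.1, hc⟩)
  have Ecard : ∀ j : ℤ, (b * σ ^ j).support.card = k - (F j).card := by
    intro j
    rw [E5, card_sdiff_of_subset (filter_subset _ _)]
  have Fcardle : ∀ j : ℤ, (F j).card ≤ k := fun j => card_le_card (filter_subset _ _)
  have Fmem : ∀ (j : ℤ) (x), x ∈ F j ↔ ∃ i : ℤ, (σ ^ i) a = x ∧ (k : ℤ) ∣ 2 * i + j := by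
    intro j x
    simp only [hFdef, mem_filter]
    constructor
    · rintro ⟨hx, hfix⟩
      obtain ⟨i, hi⟩ := rep x hx
      refine ⟨i, hi, ?_⟩
      rw [← hi, E1] at hfix
      have h1 := (KL2 _ _).mp hfix
      rw [show -(i + j) - i = -(2 * i + j) from by ring] at h1
      exact dvd_neg.mp h1
    · rintro ⟨i, hi, hdvd⟩
      refine ⟨hi ▸ hmem i, ?_⟩
      rw [← hi, E1, KL2, show -(i + j) - i = -(2 * i + j) from by ring]
      exact dvd_neg.mpr hdvd
  constructor
  · -- balanced case : sign σ = 1, so k is odd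
    intro hs
    have hkodd : Odd k := by
      rcases Nat.even_or_odd k with he | ho
      · exfalso
        rw [hσ.sign, ← hk, he.neg_one_pow] at hs
        exact absurd hs (by decide)
      · exact ho
    have hsingle : ∀ j i₀ : ℤ, (k : ℤ) ∣ 2 * i₀ + j → F j = {(σ ^ i₀) a} := by
      intro j i₀ h₀
      ext x
      rw [Fmem, mem_singleton]
      constructor
      · rintro ⟨i, hi, hd⟩
        have hd2 : (k : ℤ) ∣ 2 * (i - i₀) := by
          rw [show 2 * (i - i₀) = (2 * i + j) - (2 * i₀ + j) from by ring]
          exact dvd_sub hd h₀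
        have hco : IsCoprime ((k : ℤ)) 2 := by
          rw [Int.isCoprime_iff_gcd_eq_one]
          have h4 : Nat.gcd k 2 = 1 := Nat.coprime_two_right.mpr hkodd
          simpa [Int.gcd] using h4
        have h3 := hco.dvd_of_dvd_mul_left hd2
        rw [← hi]
        exact (KL2 i i₀).mpr h3
      · rintro rfl
        exact ⟨i₀, rfl, h₀⟩
    obtain ⟨t, ht⟩ := hkodd
    have hF0 : F 0 = {(σ ^ (0:ℤ)) a} := hsingle 0 0 (by simp)
    have hF1 : F 1 = {(σ ^ (t:ℤ)) a} := by
      refine hsingle 1 t ?_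
      refine ⟨1, ?_⟩
      push_cast [ht]
      ring
    refine ⟨b * σ ^ (0:ℤ), b * σ ^ (1:ℤ), ⟨E3 0, E3 1, by simpa using E6 0, E4 0, E4 1⟩, ?_⟩
    rw [Ecard 0, Ecard 1, hF0, hF1, card_singleton, card_singleton]
  · -- skew case : sign σ ≠ 1, so k is even
    intro hs
    have hkeven : Even k := by
      rcases Nat.even_or_odd k with he | ho
      · exact he
      · exfalso
        apply hs
        rw [hσ.sign, ← hk, ho.neg_one_pow, neg_neg]
    obtain ⟨m, hm⟩ := hkeven
    have hmpos : 1 ≤ m := by omega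
    have hkm : (k : ℤ) = 2 * m := by push_cast [hm]; ring
    have hdouble : ∀ j i₀ : ℤ, (k : ℤ) ∣ 2 * i₀ + j →
        F j = {(σ ^ i₀) a, (σ ^ (i₀ + m)) a} ∧ (F j).card = 2 := by
      intro j i₀ h₀
      have hne : (σ ^ i₀) a ≠ (σ ^ (i₀ + (m:ℤ))) a := by
        intro heq
        have h1 := (KL2 _ _).mp heq
        rw [show i₀ - (i₀ + (m:ℤ)) = -(m:ℤ) from by ring] at h1
        have h2 : (k : ℤ) ∣ (m : ℤ) := dvd_neg.mp h1
        have h3 : k ∣ m := Int.natCast_dvd_natCast.mp h2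
        have h4 := Nat.le_of_dvd (by omega) h3
        omega
      have hset : F j = {(σ ^ i₀) a, (σ ^ (i₀ + m)) a} := by
        ext x
        rw [Fmem, mem_insert, mem_singleton]
        constructor
        · rintro ⟨i, hi, hd⟩
          have hd2 : (k : ℤ) ∣ 2 * (i - i₀) := by
            rw [show 2 * (i - i₀) = (2 * i + j) - (2 * i₀ + j) from by ring]
            exact dvd_sub hd h₀
          obtain ⟨c, hc⟩ := hd2
          have hc2 : i - i₀ = (m : ℤ) * c := by
            have h5 : (2:ℤ) * (i - i₀) = 2 * ((m:ℤ) * c) := by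
              rw [hc, hkm]; ring
            exact mul_left_cancel₀ two_ne_zero h5
          rcases Int.even_or_odd c with ⟨u, hu⟩ | ⟨u, hu⟩
          · left
            rw [← hi]
            refine (KL2 i i₀).mpr ⟨u, ?_⟩
            rw [hc2, hu, hkm]; ring
          · right
            rw [← hi]
            refine (KL2 i (i₀ + m)).mpr ⟨u, ?_⟩
            rw [show i - (i₀ + (m:ℤ)) = (i - i₀) - m from by ring, hc2, hu, hkm]; ring
        · rintro (rfl | rfl)
          · exact ⟨i₀, rfl, h₀⟩
          · refine ⟨i₀ + m, rfl, ?_⟩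
            rw [show 2 * (i₀ + (m:ℤ)) + j = (2 * i₀ + j) + (k:ℤ) from by rw [hkm]; ring]
            exact dvd_add h₀ dvd_rfl
      refine ⟨hset, ?_⟩
      rw [hset, card_insert_of_notMem (by simpa using hne), card_singleton]
    have hF1 : F 1 = ∅ := by
      ext x
      simp only [Fmem, notMem_empty, iff_false, not_exists]
      rintro i ⟨hi, hd⟩
      have h2 : (2:ℤ) ∣ 2 * i + 1 := dvd_trans ⟨(m:ℤ), hkm⟩ hd
      omega
    have hc0 : (b * σ ^ (0:ℤ)).support.card = k - 2 := by
      rw [Ecard 0, (hdouble 0 0 (by simp)).2]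
    have hc1 : (b * σ ^ (1:ℤ)).support.card = k := by
      rw [Ecard 1, hF1, card_empty]
      omega
    have hc2 : (b * σ ^ (2:ℤ)).support.card = k - 2 := by
      rw [Ecard 2, (hdouble 2 (-1) (by norm_num)).2]
    constructor
    · refine ⟨b * σ ^ (0:ℤ), b * σ ^ (1:ℤ), ⟨E3 0, E3 1, by simpa using E6 0, E4 0, E4 1⟩, ?_⟩
      rw [hc0, hc1]
      omega
    · refine ⟨b * σ ^ (1:ℤ), b * σ ^ (2:ℤ), ⟨E3 1, E3 2, by simpa using E6 1, E4 1, E4 2⟩, ?_⟩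
      rw [hc1, hc2]
      omega


lemma goodPerm_one : GoodPerm (1 : Perm α) := by
  constructor
  · intro _
    exact ⟨1, 1, ⟨one_mul 1, one_mul 1, one_mul 1, subset_rfl, subset_rfl⟩, rfl⟩
  · intro hs
    exact absurd (map_one Perm.sign) hs

lemma goodPerm_all (g : Perm α) : GoodPerm g := by
  induction g using Equiv.Perm.cycle_induction_on with
  | base_one => exact goodPerm_one
  | base_cycles σ hσ => exact goodPerm_cycle hσ
  | induction_disjoint σ τ hd hc hσ hτ =>
    obtain ⟨hσ1, hσ2⟩ := hσ
    obtain ⟨hτ1, hτ2⟩ := hτ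
    have hsign : Perm.sign (σ * τ) = Perm.sign σ * Perm.sign τ := map_mul _ _ _
    constructor
    · intro hs
      rcases Int.units_eq_one_or (Perm.sign σ) with h1 | h1
      · -- both even
        have h2 : Perm.sign τ = 1 := by rw [hsign, h1, one_mul] at hs; exact hs
        obtain ⟨b₁, c₁, hp₁, he₁⟩ := hσ1 h1
        obtain ⟨b₂, c₂, hp₂, he₂⟩ := hτ1 h2
        obtain ⟨hp, hb, hc⟩ := isPaired_mul hd hp₁ hp₂
        exact ⟨_, _, hp, by rw [hb, hc, he₁, he₂]⟩
      · -- both odd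
        have h2 : Perm.sign τ ≠ 1 := by
          intro h2
          rw [hsign, h1, h2, mul_one] at hs
          exact absurd hs (by decide)
        obtain ⟨⟨b₁, c₁, hp₁, he₁⟩, -⟩ := hσ2 (by rw [h1]; decide)
        obtain ⟨-, ⟨b₂, c₂, hp₂, he₂⟩⟩ := hτ2 h2
        obtain ⟨hp, hb, hc⟩ := isPaired_mul hd hp₁ hp₂
        exact ⟨_, _, hp, by rw [hb, hc]; omega⟩
    · intro hs
      rcases Int.units_eq_one_or (Perm.sign σ) with h1 | h1
      · -- σ even, τ odd
        have h2 : Perm.sign τ ≠ 1 := by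
          intro h2; exact hs (by rw [hsign, h1, h2, mul_one])
        obtain ⟨b₁, c₁, hp₁, he₁⟩ := hσ1 h1
        obtain ⟨⟨b₂, c₂, hp₂, he₂⟩, ⟨b₃, c₃, hp₃, he₃⟩⟩ := hτ2 h2
        constructor
        · obtain ⟨hp, hb, hc⟩ := isPaired_mul hd hp₁ hp₂
          exact ⟨_, _, hp, by rw [hb, hc]; omega⟩
        · obtain ⟨hp, hb, hc⟩ := isPaired_mul hd hp₁ hp₃
          exact ⟨_, _, hp, by rw [hb, hc]; omega⟩
      · -- σ odd, τ even
        have h2 : Perm.sign τ = 1 := by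
          rcases Int.units_eq_one_or (Perm.sign τ) with h2 | h2
          · exact h2
          · exfalso; apply hs; rw [hsign, h1, h2]; decide
        obtain ⟨⟨b₁, c₁, hp₁, he₁⟩, ⟨b₃, c₃, hp₃, he₃⟩⟩ := hσ2 (by rw [h1]; decide)
        obtain ⟨b₂, c₂, hp₂, he₂⟩ := hτ1 h2
        constructor
        · obtain ⟨hp, hb, hc⟩ := isPaired_mul hd hp₁ hp₂
          exact ⟨_, _, hp, by rw [hb, hc]; omega⟩
        · obtain ⟨hp, hb, hc⟩ := isPaired_mul hd hp₃ hp₂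
          exact ⟨_, _, hp, by rw [hb, hc]; omega⟩

lemma cycleType_of_involution {b : Perm α} (hb : b * b = 1) :
    b.cycleType = Multiset.replicate b.cycleType.card 2 := by
  refine Multiset.eq_replicate_card.mpr fun r hr => ?_
  have h2 : 2 ≤ r := Equiv.Perm.two_le_of_mem_cycleType hr
  have hdvd : r ∣ orderOf b := by
    rw [← Equiv.Perm.lcm_cycleType]
    exact Multiset.dvd_lcm hr
  have ho : orderOf b ∣ 2 := orderOf_dvd_of_pow_eq_one (by rw [pow_two]; exact hb)
  have := Nat.le_of_dvd (by norm_num) (hdvd.trans ho)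
  omega

lemma key_lemma (g : Perm α) (hg : Perm.sign g = 1) :
    ∃ b s : Perm α, b * b = 1 ∧ s⁻¹ * b * s = b * g := by
  obtain ⟨b, c, ⟨hb, hc, hbc, -, -⟩, hcard⟩ := (goodPerm_all g).1 hg
  have hbt := cycleType_of_involution hb
  have hct := cycleType_of_involution hc
  have hsum : 2 * b.cycleType.card = 2 * c.cycleType.card := by
    have h1 := Equiv.Perm.sum_cycleType b
    have h2 := Equiv.Perm.sum_cycleType c
    rw [hbt, Multiset.sum_replicate, smul_eq_mul] at h1
    rw [hct, Multiset.sum_replicate, smul_eq_mul] at h2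
    omega
  have hconj : IsConj b c := by
    rw [Equiv.Perm.isConj_iff_cycleType_eq, hbt, hct]
    congr 1
    omega
  obtain ⟨u, hu⟩ := isConj_iff.mp hconj
  refine ⟨b, u⁻¹, hb, ?_⟩
  rw [inv_inv]
  have hcg : c = b * g := by
    rw [← hbc, ← mul_assoc, hb, one_mul]
  rw [← hcg, ← hu]

theorem stmt4 (n : ℕ) (hn : 3 ≤ n) (g : Equiv.Perm (Fin n))
    (hg : g ∈ alternatingGroup (Fin n)) :
    ∃ x₁ x₂ x₃ : Equiv.Perm (Fin n),
      x₁⁻¹ * x₂⁻¹ * x₁ * x₂ = g ∧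
      x₁⁻¹ * x₃⁻¹ * x₁ * x₃ = g ∧
      x₂⁻¹ * x₃⁻¹ * x₂ * x₃ = g := by
  obtain ⟨b, s, hb, hs⟩ := key_lemma g (Equiv.Perm.mem_alternatingGroup.mp hg)
  have binv : b⁻¹ = b := inv_eq_of_mul_eq_one_right hb
  have hs' : s⁻¹ * (b * s) = b * g := by rw [← mul_assoc]; exact hs
  refine ⟨s * b, b, s, ?_, ?_, ?_⟩
  · simp only [mul_inv_rev, binv, mul_assoc]
    rw [hb]
    simp only [mul_one]
    rw [hs', ← mul_assoc, hb, one_mul]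
  · simp only [mul_inv_rev, binv, mul_assoc, inv_mul_cancel_left]
    rw [hs', ← mul_assoc, hb, one_mul]
  · simp only [binv, mul_assoc]
    rw [hs', ← mul_assoc, hb, one_mul]
end

section
/- Let G be a finite group and χ a complex irreducible character of G. Define τ_χ(b) = Σ_{a∈G} |C_G(ab)b ∩ C_G(a)| · χ([a,b]). Then τ_χ is a class function on G and for every b ∈ G, τ_χ(b⁻¹) = conj(τ_χ(b)) = τ_{conj(χ)}(b), where conj(χ) is the complex conjugate character. -/
/-- `τ_χ(b) = ∑_{a ∈ G} |C_G(ab)b ∩ C_G(a)| • χ([a,b])`, with `[a,b] = a⁻¹b⁻¹ab`. -/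
noncomputable def tau {G : Type} [Group G] [Fintype G] (χ : G → ℂ) (b : G) : ℂ :=
  ∑ a : G, (centInt a b : ℂ) * χ (a⁻¹ * b⁻¹ * a * b)

open Polynomial

namespace Polynomial

theorem reverse_multiset_prod {R : Type*} [CommSemiring R] [NoZeroDivisors R]
    (s : Multiset R[X]) : s.prod.reverse = (s.map reverse).prod := by
  induction s using Multiset.induction with
  | empty => simpa using reverse_C (1 : R)
  | cons p s ih => simp [reverse_mul_of_domain, ih]

theorem reverse_X_sub_C {K : Type*} [Field K] {a : K} (ha : a ≠ 0) :
    (X - C a).reverse = C (-a) * (X - C a⁻¹) := by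
  rw [reverse, natDegree_X_sub_C, reflect_sub, reflect_one_X, reflect_C, pow_one,
    mul_sub, ← C_mul, neg_mul, mul_inv_cancel₀ ha]
  simp only [map_neg, C_1]
  ring

theorem roots_reverse_of_splits {K : Type*} [Field K] {p : K[X]} (hp : p.Splits)
    (h0 : p.coeff 0 ≠ 0) : p.reverse.roots = p.roots.map (·⁻¹) := by
  have hroot_ne : ∀ a ∈ p.roots, a ≠ 0 := by
    rintro a ha rfl
    exact h0 (by rw [coeff_zero_eq_eval_zero]; exact (mem_roots'.mp ha).2)
  have hp0 : p.leadingCoeff ≠ 0 := by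
    rw [Ne, leadingCoeff_eq_zero]; rintro rfl; simp at h0
  have hprod0 : (p.roots.map (- ·)).prod ≠ 0 :=
    Multiset.prod_ne_zero fun h => by
      obtain ⟨a, ha, ha0⟩ := Multiset.mem_map.mp h
      exact hroot_ne a ha (neg_eq_zero.mp ha0)
  have hrev : p.reverse = C (p.leadingCoeff * (p.roots.map (- ·)).prod) *
      ((p.roots.map (·⁻¹)).map fun a => X - C a).prod := by
    conv_lhs => rw [← C_leadingCoeff_mul_prod_multiset_X_sub_C (splits_iff_card_roots.mp hp)]
    rw [reverse_mul_of_domain, reverse_C, reverse_multiset_prod, Multiset.map_map, C_mul,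
      mul_assoc, ← Multiset.prod_hom _ C, Multiset.map_map, Multiset.map_map,
      ← Multiset.prod_map_mul]
    congr 2
    exact Multiset.map_congr rfl fun a ha => reverse_X_sub_C (hroot_ne a ha)
  rw [hrev, roots_C_mul _ (mul_ne_zero hp0 hprod0), roots_multiset_prod_X_sub_C]

end Polynomial

namespace Matrix

variable {n : Type*} [Fintype n] [DecidableEq n]

theorem roots_charpoly_inv {K : Type*} [Field K] {A : Matrix n n K} (hA : IsUnit A)
    (hs : A.charpoly.Splits) : A⁻¹.charpoly.roots = A.charpoly.roots.map (·⁻¹) := by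
  have hdet : IsUnit A.det := (isUnit_iff_isUnit_det A).mp hA
  have hcoeff : A.charpoly.coeff 0 ≠ 0 := by
    intro h
    exact hdet.ne_zero (by rw [det_eq_sign_charpoly_coeff, h, mul_zero])
  have hsign : ((-1) ^ Fintype.card n : K) * Ring.inverse A.det ≠ 0 :=
    mul_ne_zero (pow_ne_zero _ (neg_ne_zero.mpr one_ne_zero)) hdet.ringInverse.ne_zero
  rw [charpoly_inv A hA, ← reverse_charpoly, ← C_1, ← C_neg, ← C_pow, ← C_mul,
    roots_C_mul _ hsign, roots_reverse_of_splits hs hcoeff]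

theorem pow_eq_one_of_mem_roots_charpoly {K : Type*} [Field K] {A : Matrix n n K} {k : ℕ}
    (hA : A ^ k = 1) {μ : K} (hμ : μ ∈ A.charpoly.roots) : μ ^ k = 1 := by
  have hspec : μ ^ k ∈ spectrum K (A ^ k) :=
    spectrum.pow_mem_pow A k (mem_spectrum_of_isRoot_charpoly (mem_roots'.mp hμ).2)
  rcases subsingleton_or_nontrivial (Matrix n n K) with _ | _
  · simp [spectrum.of_subsingleton] at hspec
  · simpa [hA, spectrum.one_eq] using hspec

theorem trace_inv_eq_conj_trace_of_pow_eq_one {A : Matrix n n ℂ} {k : ℕ} (hk : k ≠ 0)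
    (hA : A ^ k = 1) : A⁻¹.trace = starRingEnd ℂ A.trace := by
  have hunit : IsUnit A := IsUnit.of_pow_eq_one hA hk
  have hconj : ∀ μ ∈ A.charpoly.roots, μ⁻¹ = starRingEnd ℂ μ := fun μ hμ =>
    RCLike.inv_eq_conj <|
      Complex.norm_eq_one_of_pow_eq_one (pow_eq_one_of_mem_roots_charpoly hA hμ) hk
  rw [trace_eq_sum_roots_charpoly, trace_eq_sum_roots_charpoly, roots_charpoly_inv hunit
    (IsAlgClosed.splits _), Multiset.map_congr rfl hconj, map_multiset_sum]

end Matrix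

theorem FDRep.char_inv_s6 {G : Type*} [Group G] [Finite G] (V : FDRep ℂ G) (g : G) :
    V.character g⁻¹ = starRingEnd ℂ (V.character g) := by
  let b := Module.finBasis ℂ V
  have hinv : LinearMap.toMatrix b b (V.ρ g⁻¹) = (LinearMap.toMatrix b b (V.ρ g))⁻¹ := by
    refine (Matrix.inv_eq_left_inv ?_).symm
    rw [← LinearMap.toMatrix_mul, ← map_mul, inv_mul_cancel, map_one, LinearMap.toMatrix_one]
  have hpow : LinearMap.toMatrix b b (V.ρ g) ^ orderOf g = 1 := by
    rw [LinearMap.toMatrix_pow, ← map_pow, pow_orderOf_eq_one, map_one, LinearMap.toMatrix_one]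
  simp only [FDRep.character, LinearMap.trace_eq_matrix_trace ℂ b, hinv]
  exact Matrix.trace_inv_eq_conj_trace_of_pow_eq_one (orderOf_pos g).ne' hpow

theorem MulEquiv.map_mem_centralizer_singleton_iff {G H : Type*} [Group G] [Group H]
    (φ : G ≃* H) {x s : G} :
    φ x ∈ Subgroup.centralizer {φ s} ↔ x ∈ Subgroup.centralizer {s} := by
  simp only [Subgroup.mem_centralizer_singleton_iff, ← map_mul, φ.injective.eq_iff]

section

variable {G : Type} [Group G]

theorem centInt_map {H : Type} [Group H] (φ : G ≃* H) (a b : G) :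
    centInt (φ a) (φ b) = centInt a b := by
  refine (Nat.card_congr (φ.toEquiv.subtypeEquiv fun x => ?_)).symm
  simp only [Set.mem_ofPred_eq, MulEquiv.toEquiv_eq_coe, EquivLike.coe_coe, ← map_inv, ← map_mul,
    φ.map_mem_centralizer_singleton_iff]

theorem centInt_mul_inv (a b : G) : centInt (a * b) b⁻¹ = centInt a b := by
  refine (Nat.card_congr ((Equiv.mulRight b⁻¹).subtypeEquiv fun x => ?_)).symm
  simp only [Set.mem_ofPred_eq, Equiv.coe_mulRight, inv_inv, inv_mul_cancel_right,
    mul_inv_cancel_right]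
  exact and_comm

variable [Fintype G]

theorem tau_map (φ : G ≃* G) {χ : G → ℂ} (hχ : ∀ g, χ (φ g) = χ g) (b : G) :
    tau χ (φ b) = tau χ b := by
  refine (Fintype.sum_equiv φ.toEquiv _ _ fun a => ?_).symm
  simp only [MulEquiv.toEquiv_eq_coe, EquivLike.coe_coe, centInt_map, ← map_inv, ← map_mul, hχ]

theorem tau_inv (χ : G → ℂ) (b : G) : tau χ b⁻¹ = tau (fun x => χ x⁻¹) b := by
  refine Fintype.sum_equiv (Equiv.mulRight b⁻¹) _ _ fun x => ?_
  rw [Equiv.coe_mulRight, ← centInt_mul_inv (x * b⁻¹) b, inv_mul_cancel_right]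
  congr 2
  group

theorem conj_tau (χ : G → ℂ) (b : G) :
    starRingEnd ℂ (tau χ b) = tau (fun x => starRingEnd ℂ (χ x)) b := by
  simp only [tau, map_sum, map_mul, map_natCast]

end

theorem stmt6_general {G : Type} [Group G] [Fintype G]
    (V : FDRep ℂ G) :
    (∀ b w : G, tau V.character (w⁻¹ * b * w) = tau V.character b) ∧
    (∀ b : G,
      tau V.character b⁻¹ = (starRingEnd ℂ) (tau V.character b) ∧
      tau V.character b⁻¹ = tau (fun x => (starRingEnd ℂ) (V.character x)) b) := by
  have hinv : (fun x => V.character x⁻¹) = fun x => starRingEnd ℂ (V.character x) :=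
    funext V.char_inv_s6
  refine ⟨fun b w => ?_, fun b => ⟨?_, ?_⟩⟩
  · simpa using tau_map (MulAut.conj w).symm (fun g => by simpa using V.char_conj g w⁻¹) b
  · rw [tau_inv, hinv, conj_tau]
  · rw [tau_inv, hinv]

theorem stmt6 {G : Type} [Group G] [Fintype G]
    (V : FDRep ℂ G) (hV : CategoryTheory.Simple V) :
    (∀ b w : G, tau V.character (w⁻¹ * b * w) = tau V.character b) ∧
    (∀ b : G,
      tau V.character b⁻¹ = (starRingEnd ℂ) (tau V.character b) ∧
      tau V.character b⁻¹ = tau (fun x => (starRingEnd ℂ) (V.character x)) b) :=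
  stmt6_general V
end

section
/- Let G be a finite group and n ≥ 2. Then for every g ∈ G, t_n(g) ≤ t_n(1), where 1 is the identity of G. -/
/-- the number of ordered n-tuples `(x₁,…,xₙ)`, encoded as `x₁` together with
`(x₂,…,xₙ)`, such that `[x₁,xᵢ] = g` for all `i = 2,…,n`, where `[x,y] = x⁻¹y⁻¹xy`. -/
noncomputable def tTup (n : ℕ) {G : Type*} [Group G] (g : G) : ℕ :=
  Nat.card {x : G × (Fin (n - 1) → G) //
    ∀ i, x.1⁻¹ * (x.2 i)⁻¹ * x.1 * x.2 i = g}

lemma fiber_le {G : Type*} [Group G] [Fintype G] (a g : G) :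
    Nat.card {y : G // a⁻¹ * y⁻¹ * a * y = g} ≤
      Nat.card {y : G // a⁻¹ * y⁻¹ * a * y = 1} := by
  rcases isEmpty_or_nonempty {y : G // a⁻¹ * y⁻¹ * a * y = g} with h | ⟨⟨y₀, h₀⟩⟩
  · simp [Nat.card_of_isEmpty]
  · apply Nat.card_le_card_of_injective
      (fun z : {y : G // a⁻¹ * y⁻¹ * a * y = g} =>
        (⟨z.1 * y₀⁻¹, by
          have hz := z.2
          have key : z.1⁻¹ * a * z.1 = y₀⁻¹ * a * y₀ := by
            have h2 : a⁻¹ * (z.1⁻¹ * a * z.1) = a⁻¹ * (y₀⁻¹ * a * y₀) := by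
              have := hz.trans h₀.symm
              group at this ⊢
              exact this
            exact mul_left_cancel h2
          calc a⁻¹ * (z.1 * y₀⁻¹)⁻¹ * a * (z.1 * y₀⁻¹)
              = a⁻¹ * y₀ * (z.1⁻¹ * a * z.1) * y₀⁻¹ := by group
            _ = a⁻¹ * y₀ * (y₀⁻¹ * a * y₀) * y₀⁻¹ := by rw [key]
            _ = 1 := by group⟩ : {y : G // a⁻¹ * y⁻¹ * a * y = 1}))
    intro z₁ z₂ h
    have : z₁.1 * y₀⁻¹ = z₂.1 * y₀⁻¹ := congrArg Subtype.val h
    exact Subtype.ext (mul_right_cancel this)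

theorem stmt8 {G : Type*} [Group G] [Fintype G] (n : ℕ) (hn : 2 ≤ n) (g : G) :
    tTup n g ≤ tTup n (1 : G) := by
  have e : ∀ h : G,
      {x : G × (Fin (n - 1) → G) // ∀ i, x.1⁻¹ * (x.2 i)⁻¹ * x.1 * x.2 i = h} ≃
        Σ a : G, (Fin (n - 1) → {y : G // a⁻¹ * y⁻¹ * a * y = h}) := fun h =>
    { toFun := fun x => ⟨x.1.1, fun i => ⟨x.1.2 i, x.2 i⟩⟩
      invFun := fun x => ⟨⟨x.1, fun i => (x.2 i).1⟩, fun i => (x.2 i).2⟩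
      left_inv := fun x => rfl
      right_inv := fun x => rfl }
  classical
  rw [tTup, tTup, Nat.card_congr (e g), Nat.card_congr (e 1),
    Nat.card_eq_fintype_card, Nat.card_eq_fintype_card,
    Fintype.card_sigma, Fintype.card_sigma]
  apply Finset.sum_le_sum
  intro a _
  rw [Fintype.card_fun, Fintype.card_fun, ← Nat.card_eq_fintype_card (α := {y : G // a⁻¹ * y⁻¹ * a * y = g}), ← Nat.card_eq_fintype_card (α := {y : G // a⁻¹ * y⁻¹ * a * y = 1})]
  exact Nat.pow_le_pow_left (fiber_le a g) _
end

section
/- Let G be a finite group and n ≥ 2. Then for every g ∈ G, t_n(g⁻¹) = t_n(g). -/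
private lemma aux_comm {G : Type*} [Group G] (a b g : G)
    (h : a⁻¹ * b⁻¹ * a * b = g) :
    (a⁻¹)⁻¹ * (a⁻¹ * b * a)⁻¹ * a⁻¹ * (a⁻¹ * b * a) = g⁻¹ := by
  rw [← h]; group

theorem stmt11 {G : Type*} [Group G] [Fintype G] (n : ℕ) (hn : 2 ≤ n) (g : G) :
    tTup n g⁻¹ = tTup n g := by
  unfold tTup
  refine Nat.card_congr ?_
  refine ⟨fun x => ⟨(x.1.1⁻¹, fun i => x.1.1⁻¹ * x.1.2 i * x.1.1), fun i => ?_⟩,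
          fun x => ⟨(x.1.1⁻¹, fun i => x.1.1⁻¹ * x.1.2 i * x.1.1), fun i => ?_⟩, ?_, ?_⟩
  · have := aux_comm _ _ _ (x.2 i)
    simpa using this
  · have := aux_comm _ _ _ (x.2 i)
    simpa using this
  · intro x
    ext <;> simp [mul_assoc]
  · intro x
    ext <;> simp [mul_assoc]
end
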